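/- (Bivariate normal: boundary regime of the joint tail.) Let Z₁, Z₂ be independent standard normal random variables, let ρ ∈ (0,1), and set X = Z₁ and Y = ρZ₁ + (1−ρ²)^{1/2} Z₂, so that (X,Y) is bivariate standard normal with correlation ρ. Let β, γ > 0 and let x_β(n), x_γ(n) satisfy Φ(x_β(n)) = 1 − n^{−β} and Φ(x_γ(n)) = 1 − n^{−γ}, where Φ is the standard normal distribution function. If β < ρ²γ, then P(X > x_β(n), Y > x_γ(n)) / n^{−γ} → 1 as n → ∞; if β = ρ²γ, then P(X > x_β(n), Y > x_γ(n)) / n^{−γ} → 1/2 as n → ∞. -/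

import Mathlib

/-!
Put `c = √(1 - ρ²)` and `W = c Z₁ - ρ Z₂`. The pair `(Y, W)` is a rotation of `(Z₁, Z₂)`, hence
again a pair of independent standard normals, and `X = ρ Y + c W`. Writing `Ψ = 1 - Φ`,
`a = x_β(n)` and `b = x_γ(n)`, independence sandwiches the joint tail:
`Ψ(b) Ψ((a - ρb)/c) ≤ P(X > a, Y > b) ≤ Ψ(b) Ψ((a - ρ(b + δ))/c) + Ψ(b + δ)`,
and `Ψ(b + δ) ≤ e^{-bδ} Ψ(b)`. Choosing `δ → 0` with `bδ → ∞`, the ratio to `Ψ(b) = n^{-γ}`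
behaves like `Ψ((a - ρb)/c)`. Finally `log Ψ(x) = -x²/2 - log x + O(1)` together with
`log Ψ(a) = (β/γ) log Ψ(b)` forces `a - ρb → -∞` if `β < ρ²γ` and `a - ρb → 0` if `β = ρ²γ`,
so the ratio tends to `Ψ(-∞) = 1`, respectively `Ψ(0) = 1/2`.
-/

open MeasureTheory Filter ProbabilityTheory

/-- The standard normal cumulative distribution function. -/
noncomputable def stdNormalCDF (x : ℝ) : ℝ :=
  ∫ u in Set.Iic x, (Real.sqrt (2 * Real.pi))⁻¹ * Real.exp (-u ^ 2 / 2)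

open Set Real Topology

noncomputable def stdGaussianTail (x : ℝ) : ℝ := (gaussianReal 0 1).real (Ioi x)

local notation "Ψ" => stdGaussianTail
local notation "φ" => gaussianPDFReal 0 1

lemma gaussianPDFReal_zero_one (x : ℝ) : φ x = (√(2 * π))⁻¹ * exp (-x ^ 2 / 2) := by
  simp [gaussianPDFReal]

lemma gaussianPDFReal_zero_one_add (u δ : ℝ) :
    φ (u + δ) = φ u * exp (-(u * δ) - δ ^ 2 / 2) := by
  rw [gaussianPDFReal_zero_one, gaussianPDFReal_zero_one, mul_assoc, ← exp_add]
  ring_nf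

lemma gaussianPDFReal_zero_one_le_one (x : ℝ) : φ x ≤ 1 := by
  rw [gaussianPDFReal_zero_one]
  have h2π : 1 ≤ √(2 * π) := one_le_sqrt.mpr (by nlinarith [pi_gt_three])
  exact mul_le_one₀ (inv_le_one_of_one_le₀ h2π) (exp_pos _).le
    (exp_le_one_iff.mpr (by nlinarith [sq_nonneg x]))

lemma antitoneOn_gaussianPDFReal_zero_one : AntitoneOn φ (Ici 0) := by
  intro u hu v _ huv
  obtain ⟨δ, hδ, rfl⟩ : ∃ δ, 0 ≤ δ ∧ v = u + δ := ⟨v - u, by linarith, by ring⟩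
  rw [gaussianPDFReal_zero_one_add]
  refine mul_le_of_le_one_right (gaussianPDFReal_nonneg _ _ _) (exp_le_one_iff.mpr ?_)
  nlinarith [mul_nonneg (mem_Ici.mp hu) hδ]

lemma log_gaussianPDFReal_zero_one (x : ℝ) : log (φ x) = -x ^ 2 / 2 - log √(2 * π) := by
  rw [gaussianPDFReal_zero_one, log_mul (by positivity) (exp_pos _).ne', log_inv, log_exp]
  ring

lemma measureReal_gaussianReal (m : ℝ) {v : NNReal} (hv : v ≠ 0) (s : Set ℝ) :
    (gaussianReal m v).real s = ∫ x in s, gaussianPDFReal m v x := by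
  rw [measureReal_def, gaussianReal_apply_eq_integral m hv, ENNReal.toReal_ofReal]
  exact setIntegral_nonneg_of_ae (ae_of_all _ (gaussianPDFReal_nonneg m v))

lemma stdNormalCDF_eq_measureReal (x : ℝ) :
    stdNormalCDF x = (gaussianReal 0 1).real (Iic x) := by
  simp [stdNormalCDF, measureReal_gaussianReal _ one_ne_zero, gaussianPDFReal_zero_one]

lemma stdNormalCDF_add_stdGaussianTail (x : ℝ) : stdNormalCDF x + Ψ x = 1 := by
  rw [stdNormalCDF_eq_measureReal, stdGaussianTail, ← compl_Iic,
    measureReal_add_measureReal_compl measurableSet_Iic, probReal_univ]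

lemma stdGaussianTail_pos (x : ℝ) : 0 < Ψ x := by
  refine ENNReal.toReal_pos (fun h ↦ ?_) (measure_ne_top _ _)
  have := gaussianReal_absolutelyContinuous' 0 one_ne_zero h
  simp at this

lemma antitone_stdGaussianTail : Antitone Ψ :=
  fun _ _ h ↦ measureReal_mono (Ioi_subset_Ioi h)

lemma stdGaussianTail_sub_stdGaussianTail (a b : ℝ) : Ψ a - Ψ b = ∫ u in a..b, φ u := by
  simp only [stdGaussianTail, measureReal_gaussianReal _ one_ne_zero]
  exact intervalIntegral.integral_Ioi_sub_Ioi' (integrable_gaussianPDFReal 0 1).integrableOn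
    (integrable_gaussianPDFReal 0 1).integrableOn

lemma lipschitzWith_stdGaussianTail : LipschitzWith 1 Ψ := by
  refine LipschitzWith.of_dist_le_mul fun a b ↦ ?_
  rw [Real.dist_eq, stdGaussianTail_sub_stdGaussianTail, NNReal.coe_one, one_mul, Real.dist_eq,
    abs_sub_comm]
  simpa using intervalIntegral.norm_integral_le_of_norm_le_const (f := φ) (C := 1) fun u _ ↦ by
    simpa [abs_of_nonneg (gaussianPDFReal_nonneg 0 1 u)] using gaussianPDFReal_zero_one_le_one u

lemma stdGaussianTail_zero : Ψ 0 = 1 / 2 := by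
  have := nullSingletonClass_gaussianReal (μ := 0) one_ne_zero
  have hsymm : Ψ 0 = (gaussianReal 0 1).real (Iic 0) := by
    have hneg : (gaussianReal 0 1).map (fun x ↦ -x) = gaussianReal 0 1 := by
      simpa using gaussianReal_map_neg (μ := 0) (v := 1)
    rw [stdGaussianTail, ← measureReal_congr (Iio_ae_eq_Iic (μ := gaussianReal 0 1))]
    conv_lhs => rw [← hneg, map_measureReal_apply measurable_neg measurableSet_Ioi]
    simp
  have := stdNormalCDF_add_stdGaussianTail 0
  rw [stdNormalCDF_eq_measureReal, ← hsymm] at this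
  linarith

lemma tendsto_stdGaussianTail_atBot : Tendsto Ψ atBot (𝓝 1) := by
  have h : ∀ x, Ψ x = 1 - cdf (gaussianReal 0 1) x := fun x ↦ by
    rw [cdf_eq_real, ← stdNormalCDF_eq_measureReal, ← stdNormalCDF_add_stdGaussianTail x]; ring
  simpa [funext h] using (tendsto_cdf_atBot (gaussianReal 0 1)).const_sub 1

lemma stdGaussianTail_add_le (x : ℝ) {δ : ℝ} (hδ : 0 ≤ δ) :
    Ψ (x + δ) ≤ exp (-(x * δ)) * Ψ x := by
  have hshift : Ψ (x + δ) = ∫ u in Ioi x, φ (u + δ) := by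
    rw [stdGaussianTail, measureReal_gaussianReal _ one_ne_zero, ← add_sub_cancel_right x δ,
      ← preimage_add_const_Ioi, add_sub_cancel_right]
    exact ((measurePreserving_add_right volume δ).setIntegral_preimage_emb
      (measurableEmbedding_addRight δ) _ _).symm
  rw [hshift, stdGaussianTail, measureReal_gaussianReal _ one_ne_zero, ← integral_const_mul]
  refine setIntegral_mono_on ((integrable_gaussianPDFReal 0 1).comp_add_right δ).integrableOn
    ((integrable_gaussianPDFReal 0 1).const_mul _).integrableOn measurableSet_Ioi fun u hu ↦ ?_
  rw [gaussianPDFReal_zero_one_add, mul_comm (exp _)]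
  refine mul_le_mul_of_nonneg_left (exp_le_exp.mpr ?_) (gaussianPDFReal_nonneg _ _ _)
  nlinarith [mul_le_mul_of_nonneg_right (le_of_lt (mem_Ioi.mp hu)) hδ]

lemma mul_gaussianPDFReal_le_stdGaussianTail_sub {x δ : ℝ} (hx : 0 ≤ x) (hδ : 0 ≤ δ) :
    δ * φ (x + δ) ≤ Ψ x - Ψ (x + δ) := by
  rw [stdGaussianTail_sub_stdGaussianTail]
  simpa using intervalIntegral.integral_mono_on (a := x) (b := x + δ) (f := fun _ ↦ φ (x + δ))
    (by linarith)
    intervalIntegrable_const ((integrable_gaussianPDFReal 0 1).intervalIntegrable)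
    fun u hu ↦ antitoneOn_gaussianPDFReal_zero_one (mem_Ici.mpr (hx.trans hu.1))
      (mem_Ici.mpr (by linarith)) hu.2

lemma stdGaussianTail_sub_le_mul {x δ : ℝ} (hx : 0 ≤ x) (hδ : 0 ≤ δ) :
    Ψ x - Ψ (x + δ) ≤ δ * φ x := by
  rw [stdGaussianTail_sub_stdGaussianTail]
  simpa using intervalIntegral.integral_mono_on (a := x) (b := x + δ) (g := fun _ ↦ φ x)
    (by linarith)
    ((integrable_gaussianPDFReal 0 1).intervalIntegrable) intervalIntegrable_const
    fun u hu ↦ antitoneOn_gaussianPDFReal_zero_one (mem_Ici.mpr hx)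
      (mem_Ici.mpr (hx.trans hu.1)) hu.1

lemma stdGaussianTail_le_one (x : ℝ) : Ψ x ≤ 1 := measureReal_le_one

lemma exp_mul_gaussianPDFReal_div_le_stdGaussianTail {x : ℝ} (hx : 1 ≤ x) :
    exp (-(3 / 2)) * φ x / x ≤ Ψ x := by
  have hx0 : 0 < x := by linarith
  have hinterval := mul_gaussianPDFReal_le_stdGaussianTail_sub hx0.le (inv_nonneg.mpr hx0.le)
  have hdecay : -(3 / 2) ≤ -(x * x⁻¹) - x⁻¹ ^ 2 / 2 := by
    rw [mul_inv_cancel₀ hx0.ne']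
    nlinarith [inv_le_one_of_one_le₀ hx, inv_nonneg.mpr hx0.le]
  rw [gaussianPDFReal_zero_one_add] at hinterval
  calc exp (-(3 / 2)) * φ x / x ≤ x⁻¹ * (φ x * exp (-(x * x⁻¹) - x⁻¹ ^ 2 / 2)) := by
        rw [div_eq_inv_mul, mul_comm (exp _)]
        gcongr
        exact gaussianPDFReal_nonneg _ _ _
    _ ≤ Ψ x := by linarith [stdGaussianTail_pos (x + x⁻¹)]

lemma stdGaussianTail_le_two_mul_gaussianPDFReal_div {x : ℝ} (hx : 1 ≤ x) :
    Ψ x ≤ 2 * φ x / x := by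
  -- `Ψ (x + 1/x) ≤ e⁻¹ Ψ x`: at least half of the tail lies in `[x, x + 1/x]`, where `φ ≤ φ x`
  have hx0 : 0 < x := by linarith
  have hinterval := stdGaussianTail_sub_le_mul hx0.le (inv_nonneg.mpr hx0.le)
  have hshift := stdGaussianTail_add_le x (inv_nonneg.mpr hx0.le)
  rw [mul_inv_cancel₀ hx0.ne'] at hshift
  have he : exp (-1) ≤ 1 / 2 := by
    rw [exp_neg, inv_le_comm₀ (exp_pos 1) (by norm_num)]
    linarith [add_one_le_exp 1]
  have hhalf : Ψ x / 2 ≤ x⁻¹ * φ x := by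
    nlinarith [mul_le_mul_of_nonneg_right he (stdGaussianTail_pos x).le]
  have := mul_le_mul_of_nonneg_left hhalf hx0.le
  rw [← mul_assoc, mul_inv_cancel₀ hx0.ne', one_mul] at this
  rw [le_div_iff₀ hx0]
  linarith

lemma exists_abs_log_stdGaussianTail_add_le :
    ∃ C, ∀ x, 1 ≤ x → |log (Ψ x) + x ^ 2 / 2 + log x| ≤ C := by
  refine ⟨3 / 2 + log 2 + |log √(2 * π)|, fun x hx ↦ ?_⟩
  have hx0 : 0 < x := by linarith
  have hφ := gaussianPDFReal_pos 0 1 x one_ne_zero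
  have hlower := log_le_log (by positivity) (exp_mul_gaussianPDFReal_div_le_stdGaussianTail hx)
  have hupper :=
    log_le_log (stdGaussianTail_pos x) (stdGaussianTail_le_two_mul_gaussianPDFReal_div hx)
  rw [log_div (by positivity) hx0.ne', log_mul (exp_pos _).ne' hφ.ne', log_exp,
    log_gaussianPDFReal_zero_one] at hlower
  rw [log_div (by positivity) hx0.ne', log_mul two_ne_zero hφ.ne',
    log_gaussianPDFReal_zero_one] at hupper
  rw [abs_le]
  constructor <;> linarith [le_abs_self (log √(2 * π)), neg_abs_le (log √(2 * π)),
    log_nonneg one_le_two]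

lemma tendsto_mul_sub_log_atTop {c : ℝ} (hc : 0 < c) :
    Tendsto (fun x ↦ c * x - log x) atTop atTop := by
  refine tendsto_atTop_mono' _ ?_ (tendsto_id.const_mul_atTop (half_pos hc))
  filter_upwards [isLittleO_log_id_atTop.def (half_pos hc), eventually_ge_atTop 0] with x hx hx0
  rw [Real.norm_eq_abs, Real.norm_eq_abs, id, abs_of_nonneg hx0] at hx
  dsimp only [id]
  linarith [le_abs_self (log x)]

lemma log_stdGaussianTail_mul_add_lt {σ ε : ℝ} (hσ0 : 0 < σ) (hσ1 : σ < 1) (hε : 0 ≤ ε) :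
    ∀ᶠ x in atTop, log (Ψ (σ * x + ε)) < σ ^ 2 * log (Ψ x) := by
  obtain ⟨C, hC⟩ := exists_abs_log_stdGaussianTail_add_le
  have hlog := tendsto_log_atTop.const_mul_atTop (show 0 < 1 - σ ^ 2 by nlinarith)
  filter_upwards [eventually_ge_atTop 1, eventually_ge_atTop σ⁻¹,
    hlog.eventually_gt_atTop ((1 + σ ^ 2) * C - log σ)] with x hx1 hxσ hlogx
  have hσx : 1 ≤ σ * x := by rwa [inv_le_iff_one_le_mul₀' hσ0] at hxσ
  have hshifted := abs_le.mp (hC (σ * x + ε) (by linarith))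
  have hbase := abs_le.mp (hC x hx1)
  have hlog_le : log σ + log x ≤ log (σ * x + ε) := by
    rw [← log_mul hσ0.ne' (by linarith)]
    exact log_le_log (by positivity) (by linarith)
  have hsq : σ ^ 2 * x ^ 2 ≤ (σ * x + ε) ^ 2 := by nlinarith
  nlinarith [mul_le_mul_of_nonneg_left hbase.1 (sq_nonneg σ)]

lemma lt_log_stdGaussianTail_mul_sub {σ ε : ℝ} (hσ0 : 0 < σ) (hσ1 : σ ≤ 1) (hε : 0 < ε) :
    ∀ᶠ x in atTop, σ ^ 2 * log (Ψ x) < log (Ψ (σ * x - ε)) := by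
  obtain ⟨C, hC⟩ := exists_abs_log_stdGaussianTail_add_le
  filter_upwards [eventually_ge_atTop 1, eventually_ge_atTop ((1 + ε) / σ),
    (tendsto_mul_sub_log_atTop (mul_pos hσ0 hε)).eventually_gt_atTop
      ((1 + σ ^ 2) * C + ε ^ 2 / 2)] with x hx1 hxσ hlin
  have hσx : 1 ≤ σ * x - ε := by rw [div_le_iff₀' hσ0] at hxσ; linarith
  have hshifted := abs_le.mp (hC (σ * x - ε) hσx)
  have hbase := abs_le.mp (hC x hx1)
  have hlog_le : log (σ * x - ε) ≤ log x := log_le_log (by linarith) (by nlinarith)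
  have hlogx : 0 ≤ log x := log_nonneg hx1
  nlinarith [mul_le_mul_of_nonneg_left hbase.2 (sq_nonneg σ), mul_nonneg (sq_nonneg σ) hlogx]

section Quantiles

lemma lt_of_log_stdGaussianTail_lt {x y : ℝ} (h : log (Ψ x) < log (Ψ y)) : y < x := by
  by_contra! hxy
  exact h.not_ge (log_le_log (stdGaussianTail_pos y) (antitone_stdGaussianTail hxy))

variable {α : Type*} {l : Filter α} {a b : α → ℝ}

lemma tendsto_atTop_of_stdGaussianTail_tendsto_zero (h : Tendsto (fun n ↦ Ψ (b n)) l (𝓝 0)) :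
    Tendsto b l atTop := by
  refine tendsto_atTop.2 fun M ↦ ?_
  filter_upwards [h.eventually_lt_const (stdGaussianTail_pos M)] with n hn
  by_contra! hlt
  exact (antitone_stdGaussianTail hlt.le).not_gt hn

lemma tendsto_sub_mul_atBot_of_log_stdGaussianTail {ρ θ : ℝ} (hρ0 : 0 < ρ) (hρ1 : ρ ≤ 1)
    (hθ : θ < ρ ^ 2) (hb : Tendsto b l atTop)
    (hab : ∀ᶠ n in l, log (Ψ (a n)) = θ * log (Ψ (b n))) :
    Tendsto (fun n ↦ a n - ρ * b n) l atBot := by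
  obtain ⟨σ, hθσ, hσρ⟩ := exists_between ((Real.sqrt_lt' hρ0).mpr hθ)
  have hσ0 : 0 < σ := (Real.sqrt_nonneg θ).trans_lt hθσ
  have hθσ2 : θ ≤ σ ^ 2 := (Real.lt_sq_of_sqrt_lt hθσ).le
  have hlt : ∀ᶠ n in l, a n < σ * b n := by
    filter_upwards [hab, hb.eventually (log_stdGaussianTail_mul_add_lt hσ0
      (hσρ.trans_le hρ1) le_rfl)] with n hn hσn
    refine lt_of_log_stdGaussianTail_lt ?_
    rw [add_zero] at hσn
    rw [hn]
    nlinarith [log_nonpos (stdGaussianTail_pos (b n)).le (stdGaussianTail_le_one (b n))]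
  refine tendsto_atBot_mono' l ?_ (hb.const_mul_atTop_of_neg (sub_neg.mpr hσρ))
  filter_upwards [hlt] with n hn
  nlinarith

lemma tendsto_sub_mul_zero_of_log_stdGaussianTail {ρ : ℝ} (hρ0 : 0 < ρ) (hρ1 : ρ < 1)
    (hb : Tendsto b l atTop) (hab : ∀ᶠ n in l, log (Ψ (a n)) = ρ ^ 2 * log (Ψ (b n))) :
    Tendsto (fun n ↦ a n - ρ * b n) l (𝓝 0) := by
  refine tendsto_order.2 ⟨fun ε hε ↦ ?_, fun ε hε ↦ ?_⟩
  · filter_upwards [hab, hb.eventually (lt_log_stdGaussianTail_mul_sub hρ0 hρ1.le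
      (neg_pos.mpr hε))] with n hn hρn
    have := lt_of_log_stdGaussianTail_lt (hn ▸ hρn)
    linarith
  · filter_upwards [hab, hb.eventually (log_stdGaussianTail_mul_add_lt hρ0 hρ1
      hε.le)] with n hn hρn
    have := lt_of_log_stdGaussianTail_lt (hn ▸ hρn)
    linarith

lemma eventually_stdGaussianTail_eq_rpow {x : ℕ → ℝ} {β : ℝ}
    (hx : ∀ n : ℕ, 2 ≤ n → stdNormalCDF (x n) = 1 - (n : ℝ) ^ (-β)) :
    ∀ᶠ n in atTop, Ψ (x n) = (n : ℝ) ^ (-β) := by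
  filter_upwards [eventually_ge_atTop 2] with n hn
  linarith [hx n hn, stdNormalCDF_add_stdGaussianTail (x n)]

lemma eventually_log_stdGaussianTail_eq_div_mul {x y : ℕ → ℝ} {β γ : ℝ} (hγ : γ ≠ 0)
    (hx : ∀ᶠ n in atTop, Ψ (x n) = (n : ℝ) ^ (-β)) (hy : ∀ᶠ n in atTop, Ψ (y n) = (n : ℝ) ^ (-γ)) :
    ∀ᶠ n in atTop, log (Ψ (x n)) = β / γ * log (Ψ (y n)) := by
  filter_upwards [hx, hy, eventually_gt_atTop 0] with n hxn hyn hn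
  rw [hxn, hyn, log_rpow (by positivity), log_rpow (by positivity)]
  field_simp

end Quantiles

section GaussianPair

variable {Ω : Type*} [MeasurableSpace Ω] {μ : Measure Ω}

lemma hasLaw_gaussianReal_of_stdNormalCDF [IsProbabilityMeasure μ] {Z : Ω → ℝ}
    (hm : Measurable Z) (hZ : ∀ x, (μ {a | Z a ≤ x}).toReal = stdNormalCDF x) :
    HasLaw Z (gaussianReal 0 1) μ := by
  have := Measure.isProbabilityMeasure_map (μ := μ) hm.aemeasurable
  refine ⟨hm.aemeasurable, Measure.ext_of_Iic _ _ fun x ↦ ?_⟩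
  rw [← ENNReal.toReal_eq_toReal_iff' (measure_ne_top _ _) (measure_ne_top _ _),
    Measure.map_apply hm measurableSet_Iic]
  exact (hZ x).trans (stdNormalCDF_eq_measureReal x)

variable {Z₁ Z₂ : Ω → ℝ}

lemma hasLaw_mul_add_mul_gaussianReal (h₁ : HasLaw Z₁ (gaussianReal 0 1) μ)
    (h₂ : HasLaw Z₂ (gaussianReal 0 1) μ) (hind : IndepFun Z₁ Z₂ μ) {p q : ℝ}
    (hpq : p ^ 2 + q ^ 2 = 1) :
    HasLaw (fun ω ↦ p * Z₁ ω + q * Z₂ ω) (gaussianReal 0 1) μ := by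
  refine ⟨by fun_prop, ?_⟩
  have := gaussianReal_add_gaussianReal_of_indepFun
    (hind.comp (measurable_const_mul p) (measurable_const_mul q))
    (gaussianReal_const_mul h₁ p).map_eq (gaussianReal_const_mul h₂ q).map_eq
  change (μ.map ((fun x ↦ p * x) ∘ Z₁ + (fun x ↦ q * x) ∘ Z₂)) = _
  rw [this]
  congr 1
  · simp
  · exact NNReal.eq (by simp [hpq])

lemma covariance_mul_add_mul (h₁ : HasLaw Z₁ (gaussianReal 0 1) μ)
    (h₂ : HasLaw Z₂ (gaussianReal 0 1) μ) (hind : IndepFun Z₁ Z₂ μ) (p q r s : ℝ) :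
    cov[fun ω ↦ p * Z₁ ω + q * Z₂ ω, fun ω ↦ r * Z₁ ω + s * Z₂ ω; μ] = p * r + q * s := by
  have := h₁.isProbabilityMeasure
  have m₁ := h₁.hasGaussianLaw.memLp_two
  have m₂ := h₂.hasGaussianLaw.memLp_two
  have v₁ : cov[Z₁, Z₁; μ] = 1 := by
    rw [covariance_self h₁.aemeasurable, h₁.variance_eq, variance_id_gaussianReal]; simp
  have v₂ : cov[Z₂, Z₂; μ] = 1 := by
    rw [covariance_self h₂.aemeasurable, h₂.variance_eq, variance_id_gaussianReal]; simp
  have c₁₂ : cov[Z₁, Z₂; μ] = 0 := hind.covariance_eq_zero m₁ m₂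
  change cov[p • Z₁ + q • Z₂, r • Z₁ + s • Z₂; μ] = _
  rw [covariance_add_left (m₁.const_smul p) (m₂.const_smul q)
      ((m₁.const_smul r).add (m₂.const_smul s)),
    covariance_add_right (m₁.const_smul p) (m₁.const_smul r) (m₂.const_smul s),
    covariance_add_right (m₂.const_smul q) (m₁.const_smul r) (m₂.const_smul s)]
  simp only [covariance_smul_left, covariance_smul_right, v₁, v₂, c₁₂, covariance_comm Z₂ Z₁]
  ring

lemma indepFun_rotation (h₁ : HasLaw Z₁ (gaussianReal 0 1) μ)
    (h₂ : HasLaw Z₂ (gaussianReal 0 1) μ) (hind : IndepFun Z₁ Z₂ μ) (p q : ℝ) :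
    IndepFun (fun ω ↦ p * Z₁ ω + q * Z₂ ω) (fun ω ↦ q * Z₁ ω + -p * Z₂ ω) μ := by
  have hpair := hind.hasGaussianLaw h₁.hasGaussianLaw h₂.hasGaussianLaw
  set L : ℝ × ℝ →L[ℝ] ℝ × ℝ :=
    (p • ContinuousLinearMap.fst ℝ ℝ ℝ + q • ContinuousLinearMap.snd ℝ ℝ ℝ).prod
      (q • ContinuousLinearMap.fst ℝ ℝ ℝ + -p • ContinuousLinearMap.snd ℝ ℝ ℝ)
  refine HasGaussianLaw.indepFun_of_covariance_eq_zero ?_ ?_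
  · simpa [L] using hpair.map_fun L
  · rw [covariance_mul_add_mul h₁ h₂ hind]; ring

end GaussianPair

section JointTail

variable {Ω : Type*} [MeasurableSpace Ω] {μ : Measure Ω} {X Y W : Ω → ℝ} {ρ c : ℝ}

lemma measureReal_preimage_Ioi_inter_preimage_Ioi (hY : HasLaw Y (gaussianReal 0 1) μ)
    (hW : HasLaw W (gaussianReal 0 1) μ) (hYW : IndepFun Y W μ) (b t : ℝ) :
    μ.real (Y ⁻¹' Ioi b ∩ W ⁻¹' Ioi t) = Ψ b * Ψ t := by
  rw [measureReal_def, hYW.measure_inter_preimage_eq_mul _ _ measurableSet_Ioi measurableSet_Ioi,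
    ENNReal.toReal_mul, ← measureReal_def, ← measureReal_def]
  exact congr_arg₂ (· * ·) (hY.measureReal_eq measurableSet_Ioi)
    (hW.measureReal_eq measurableSet_Ioi)

lemma measureReal_le_stdGaussianTail (hY : HasLaw Y (gaussianReal 0 1) μ) (a b : ℝ) :
    μ.real {ω | X ω > a ∧ Y ω > b} ≤ Ψ b := by
  have := hY.isProbabilityMeasure
  exact (measureReal_mono fun _ h ↦ h.2).trans_eq (hY.measureReal_eq measurableSet_Ioi)

lemma stdGaussianTail_mul_le_measureReal (hY : HasLaw Y (gaussianReal 0 1) μ)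
    (hW : HasLaw W (gaussianReal 0 1) μ) (hYW : IndepFun Y W μ) (hρ : 0 ≤ ρ) (hc : 0 < c)
    (hX : ∀ ω, X ω = ρ * Y ω + c * W ω) (a b : ℝ) :
    Ψ b * Ψ ((a - ρ * b) / c) ≤ μ.real {ω | X ω > a ∧ Y ω > b} := by
  have := hY.isProbabilityMeasure
  rw [← measureReal_preimage_Ioi_inter_preimage_Ioi hY hW hYW]
  refine measureReal_mono fun ω ⟨hYb, hWt⟩ ↦ ⟨?_, hYb⟩
  rw [mem_preimage, mem_Ioi, div_lt_iff₀ hc] at hWt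
  rw [hX]
  nlinarith [mul_le_mul_of_nonneg_left (le_of_lt hYb) hρ]

lemma measureReal_le_stdGaussianTail_mul_add (hY : HasLaw Y (gaussianReal 0 1) μ)
    (hW : HasLaw W (gaussianReal 0 1) μ) (hYW : IndepFun Y W μ) (hρ : 0 ≤ ρ) (hc : 0 < c)
    (hX : ∀ ω, X ω = ρ * Y ω + c * W ω) (a b δ : ℝ) :
    μ.real {ω | X ω > a ∧ Y ω > b} ≤ Ψ b * Ψ ((a - ρ * (b + δ)) / c) + Ψ (b + δ) := by
  have := hY.isProbabilityMeasure
  calc μ.real {ω | X ω > a ∧ Y ω > b}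
      ≤ μ.real (Y ⁻¹' Ioi b ∩ W ⁻¹' Ioi ((a - ρ * (b + δ)) / c) ∪ Y ⁻¹' Ioi (b + δ)) := by
        refine measureReal_mono fun ω ⟨hXa, hYb⟩ ↦ ?_
        by_cases hYδ : b + δ < Y ω
        · exact Or.inr hYδ
        refine Or.inl ⟨hYb, ?_⟩
        rw [mem_preimage, mem_Ioi, div_lt_iff₀ hc]
        rw [hX] at hXa
        nlinarith [mul_le_mul_of_nonneg_left (not_lt.mp hYδ) hρ]
    _ ≤ μ.real (Y ⁻¹' Ioi b ∩ W ⁻¹' Ioi ((a - ρ * (b + δ)) / c)) +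
          μ.real (Y ⁻¹' Ioi (b + δ)) := measureReal_union_le _ _
    _ = Ψ b * Ψ ((a - ρ * (b + δ)) / c) + Ψ (b + δ) := by
        rw [measureReal_preimage_Ioi_inter_preimage_Ioi hY hW hYW]
        exact congr_arg _ (hY.measureReal_eq measurableSet_Ioi)

variable {α : Type*} {l : Filter α} {a b : α → ℝ}

lemma tendsto_measureReal_div_stdGaussianTail_of_tendsto_atBot
    (hY : HasLaw Y (gaussianReal 0 1) μ) (hW : HasLaw W (gaussianReal 0 1) μ)
    (hYW : IndepFun Y W μ) (hρ : 0 ≤ ρ) (hc : 0 < c) (hX : ∀ ω, X ω = ρ * Y ω + c * W ω)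
    (hab : Tendsto (fun n ↦ a n - ρ * b n) l atBot) :
    Tendsto (fun n ↦ μ.real {ω | X ω > a n ∧ Y ω > b n} / Ψ (b n)) l (𝓝 1) := by
  refine tendsto_of_tendsto_of_tendsto_of_le_of_le
    (tendsto_stdGaussianTail_atBot.comp (hab.atBot_div_const hc)) tendsto_const_nhds
    (fun n ↦ ?_) (fun n ↦ ?_)
  · rw [Function.comp_apply, le_div_iff₀ (stdGaussianTail_pos _), mul_comm]
    exact stdGaussianTail_mul_le_measureReal hY hW hYW hρ hc hX _ _
  · exact div_le_one_of_le₀ (measureReal_le_stdGaussianTail hY _ _) (stdGaussianTail_pos _).le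

lemma tendsto_measureReal_div_stdGaussianTail_of_tendsto_zero
    (hY : HasLaw Y (gaussianReal 0 1) μ) (hW : HasLaw W (gaussianReal 0 1) μ)
    (hYW : IndepFun Y W μ) (hρ : 0 ≤ ρ) (hc : 0 < c) (hX : ∀ ω, X ω = ρ * Y ω + c * W ω)
    (hb : Tendsto b l atTop) (hab : Tendsto (fun n ↦ a n - ρ * b n) l (𝓝 0)) :
    Tendsto (fun n ↦ μ.real {ω | X ω > a n ∧ Y ω > b n} / Ψ (b n)) l (𝓝 (1 / 2)) := by
  have hΨ : Tendsto Ψ (𝓝 0) (𝓝 (1 / 2)) :=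
    stdGaussianTail_zero ▸ lipschitzWith_stdGaussianTail.continuous.tendsto 0
  set δ : α → ℝ := fun n ↦ (√(b n))⁻¹
  have hδ : Tendsto δ l (𝓝 0) := tendsto_inv_atTop_zero.comp (tendsto_sqrt_atTop.comp hb)
  have hbδ : Tendsto (fun n ↦ b n * δ n) l atTop := by
    refine (tendsto_sqrt_atTop.comp hb).congr' ?_
    filter_upwards [hb.eventually_gt_atTop 0] with n hn
    simp [δ, ← div_eq_mul_inv, div_sqrt]
  have hupper : Tendsto (fun n ↦ Ψ ((a n - ρ * (b n + δ n)) / c) + exp (-(b n * δ n))) l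
      (𝓝 (1 / 2)) := by
    have harg : Tendsto (fun n ↦ (a n - ρ * (b n + δ n)) / c) l (𝓝 0) := by
      simpa using ((hab.sub (hδ.const_mul ρ)).div_const c).congr fun n ↦ by ring
    simpa using (hΨ.comp harg).add (tendsto_exp_atBot.comp (tendsto_neg_atTop_atBot.comp hbδ))
  refine tendsto_of_tendsto_of_tendsto_of_le_of_le (hΨ.comp (by simpa using hab.div_const c))
    hupper (fun n ↦ ?_) (fun n ↦ ?_)
  · rw [Function.comp_apply, le_div_iff₀ (stdGaussianTail_pos _), mul_comm]
    exact stdGaussianTail_mul_le_measureReal hY hW hYW hρ hc hX _ _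
  · rw [div_le_iff₀ (stdGaussianTail_pos _), add_mul]
    refine (measureReal_le_stdGaussianTail_mul_add hY hW hYW hρ hc hX _ _ (δ n)).trans ?_
    rw [mul_comm (Ψ (b n))]
    gcongr
    exact stdGaussianTail_add_le _ (inv_nonneg.mpr (sqrt_nonneg _))

end JointTail

theorem bivariate_normal_boundary_regime_general
    {Ω : Type*} [MeasurableSpace Ω] (μ : Measure Ω) [IsProbabilityMeasure μ]
    (Z₁ Z₂ : Ω → ℝ) (hm₁ : Measurable Z₁) (hm₂ : Measurable Z₂)
    (hind : IndepFun Z₁ Z₂ μ)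
    (hZ₁ : ∀ x : ℝ, (μ {a | Z₁ a ≤ x}).toReal = stdNormalCDF x)
    (hZ₂ : ∀ x : ℝ, (μ {a | Z₂ a ≤ x}).toReal = stdNormalCDF x)
    (ρ : ℝ) (hρ : ρ ∈ Set.Ioo (0:ℝ) 1)
    (β γ : ℝ) (hγ : 0 < γ)
    (xβ xγ : ℕ → ℝ)
    (hxβ : ∀ n : ℕ, 2 ≤ n → stdNormalCDF (xβ n) = 1 - (n : ℝ) ^ (-β))
    (hxγ : ∀ n : ℕ, 2 ≤ n → stdNormalCDF (xγ n) = 1 - (n : ℝ) ^ (-γ)) :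
    (β < ρ ^ 2 * γ →
      Tendsto
        (fun n : ℕ =>
          (μ {a | Z₁ a > xβ n ∧
            ρ * Z₁ a + Real.sqrt (1 - ρ ^ 2) * Z₂ a > xγ n}).toReal / (n : ℝ) ^ (-γ))
        atTop (nhds 1)) ∧
    (β = ρ ^ 2 * γ →
      Tendsto
        (fun n : ℕ =>
          (μ {a | Z₁ a > xβ n ∧
            ρ * Z₁ a + Real.sqrt (1 - ρ ^ 2) * Z₂ a > xγ n}).toReal / (n : ℝ) ^ (-γ))
        atTop (nhds (1 / 2))) := by
  obtain ⟨hρ0, hρ1⟩ := hρ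
  set c := Real.sqrt (1 - ρ ^ 2)
  have hc : 0 < c := Real.sqrt_pos.mpr (by nlinarith)
  have hρc : ρ ^ 2 + c ^ 2 = 1 := by rw [Real.sq_sqrt (by nlinarith)]; ring
  have h₁ := hasLaw_gaussianReal_of_stdNormalCDF hm₁ hZ₁
  have h₂ := hasLaw_gaussianReal_of_stdNormalCDF hm₂ hZ₂
  have hY := hasLaw_mul_add_mul_gaussianReal h₁ h₂ hind hρc
  have hW := hasLaw_mul_add_mul_gaussianReal h₁ h₂ hind (p := c) (q := -ρ)
    (by linear_combination hρc)
  have hYW := indepFun_rotation h₁ h₂ hind ρ c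
  have hX : ∀ ω, Z₁ ω = ρ * (ρ * Z₁ ω + c * Z₂ ω) + c * (c * Z₁ ω + -ρ * Z₂ ω) :=
    fun ω ↦ by linear_combination (-Z₁ ω) * hρc
  have hΨγ := eventually_stdGaussianTail_eq_rpow hxγ
  have hlog := eventually_log_stdGaussianTail_eq_div_mul hγ.ne'
    (eventually_stdGaussianTail_eq_rpow hxβ) hΨγ
  have hb : Tendsto xγ atTop atTop := tendsto_atTop_of_stdGaussianTail_tendsto_zero <|
    ((tendsto_rpow_neg_atTop hγ).comp tendsto_natCast_atTop_atTop).congr'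
      (hΨγ.mono fun _ h ↦ h.symm)
  have hratio : (fun n : ℕ ↦ (μ {a | Z₁ a > xβ n ∧ ρ * Z₁ a + c * Z₂ a > xγ n}).toReal /
      (n : ℝ) ^ (-γ)) =ᶠ[atTop] fun n ↦
      μ.real {a | Z₁ a > xβ n ∧ ρ * Z₁ a + c * Z₂ a > xγ n} / Ψ (xγ n) := by
    filter_upwards [hΨγ] with n h
    rw [h, measureReal_def]
  refine ⟨fun hlt ↦ ?_, fun heq ↦ ?_⟩
  · refine (tendsto_measureReal_div_stdGaussianTail_of_tendsto_atBot hY hW hYW hρ0.le hc hX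
      (tendsto_sub_mul_atBot_of_log_stdGaussianTail hρ0 hρ1.le ((div_lt_iff₀ hγ).mpr hlt) hb
        hlog)).congr' hratio.symm
  · have hθ : β / γ = ρ ^ 2 := by rw [heq]; field_simp
    refine (tendsto_measureReal_div_stdGaussianTail_of_tendsto_zero hY hW hYW hρ0.le hc hX hb
      (tendsto_sub_mul_zero_of_log_stdGaussianTail hρ0 hρ1 hb (hθ ▸ hlog))).congr' hratio.symm

/-- bivariate normal, boundary regime: with `X = Z₁`,
`Y = ρZ₁ + √(1-ρ²)Z₂` bivariate standard normal with correlation `ρ ∈ (0,1)` and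
`Φ(x_β(n)) = 1 - n^{-β}`, `Φ(x_γ(n)) = 1 - n^{-γ}`: if `β < ρ²γ` then
`P(X > x_β(n), Y > x_γ(n))/n^{-γ} → 1`; if `β = ρ²γ` then the ratio tends to `1/2`. -/
theorem bivariate_normal_boundary_regime
    {Ω : Type*} [MeasurableSpace Ω] (μ : Measure Ω) [IsProbabilityMeasure μ]
    (Z₁ Z₂ : Ω → ℝ) (hm₁ : Measurable Z₁) (hm₂ : Measurable Z₂)
    (hind : IndepFun Z₁ Z₂ μ)
    (hZ₁ : ∀ x : ℝ, (μ {a | Z₁ a ≤ x}).toReal = stdNormalCDF x)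
    (hZ₂ : ∀ x : ℝ, (μ {a | Z₂ a ≤ x}).toReal = stdNormalCDF x)
    (ρ : ℝ) (hρ : ρ ∈ Set.Ioo (0:ℝ) 1)
    (β γ : ℝ) (hβ : 0 < β) (hγ : 0 < γ)
    (xβ xγ : ℕ → ℝ)
    (hxβ : ∀ n : ℕ, 2 ≤ n → stdNormalCDF (xβ n) = 1 - (n : ℝ) ^ (-β))
    (hxγ : ∀ n : ℕ, 2 ≤ n → stdNormalCDF (xγ n) = 1 - (n : ℝ) ^ (-γ)) :
    (β < ρ ^ 2 * γ →
      Tendsto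
        (fun n : ℕ =>
          (μ {a | Z₁ a > xβ n ∧
            ρ * Z₁ a + Real.sqrt (1 - ρ ^ 2) * Z₂ a > xγ n}).toReal / (n : ℝ) ^ (-γ))
        atTop (nhds 1)) ∧
    (β = ρ ^ 2 * γ →
      Tendsto
        (fun n : ℕ =>
          (μ {a | Z₁ a > xβ n ∧
            ρ * Z₁ a + Real.sqrt (1 - ρ ^ 2) * Z₂ a > xγ n}).toReal / (n : ℝ) ^ (-γ))
        atTop (nhds (1 / 2))) :=
  bivariate_normal_boundary_regime_general μ Z₁ Z₂ hm₁ hm₂ hind hZ₁ hZ₂ ρ hρ β γ hγ xβ xγ hxβ hxγ
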